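/- arXiv:2108.09198 — 6 statements merged into one kernel-verified Lean document; each statement's English description precedes it below -/
import Mathlib

section
/- An additive code C of length n over F4 is an additive left polycyclic code induced by a binary vector a if and only if the set {c̃(x) mod (x^n − ã(x)) : c ∈ C} is an F2[x]-submodule of F4[x]/⟨x^n − ã(x)⟩ (equivalently, this additive subgroup is closed under multiplication by x), where c̃(x) = c_{n−1} + c_{n−2} x + ⋯ + c_0 x^{n−1} and ã(x) = a_{n−1} + a_{n−2} x + ⋯ + a_0 x^{n−1}. -/
open Polynomial

noncomputable section

abbrev F4 : Type := GaloisField 2 2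

def IsBin (z : F4) : Prop := z = 0 ∨ z = 1

def IsBinVec {n : ℕ} (a : Fin n → F4) : Prop := ∀ i, IsBin (a i)

def IsBinPoly (p : Polynomial F4) : Prop := ∀ i, IsBin (p.coeff i)

def polyOfVec {n : ℕ} (c : Fin n → F4) : Polynomial F4 :=
  ∑ i : Fin n, Polynomial.C (c i) * X ^ (i : ℕ)

def rightShift {n : ℕ} (a c : Fin n → F4) : Fin n → F4 := fun i =>
  (if (i : ℕ) = 0 then 0 else c ⟨(i : ℕ) - 1, lt_of_le_of_lt (Nat.sub_le _ _) i.isLt⟩)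
    + c ⟨n - 1, Nat.sub_lt i.pos Nat.one_pos⟩ * a i

def leftShift {n : ℕ} (a c : Fin n → F4) : Fin n → F4 := fun i =>
  (if h : (i : ℕ) + 1 < n then c ⟨(i : ℕ) + 1, h⟩ else 0) + c ⟨0, i.pos⟩ * a i

def seqShift {n : ℕ} (a c : Fin n → F4) : Fin n → F4 := fun i =>
  if h : (i : ℕ) + 1 < n then c ⟨(i : ℕ) + 1, h⟩ else ∑ j, a j * c j

def IsRightPolycyclic {n : ℕ} (a : Fin n → F4) (C : AddSubgroup (Fin n → F4)) : Prop :=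
  ∀ c ∈ C, rightShift a c ∈ C

def IsLeftPolycyclic {n : ℕ} (a : Fin n → F4) (C : AddSubgroup (Fin n → F4)) : Prop :=
  ∀ c ∈ C, leftShift a c ∈ C

def quotMk {n : ℕ} (a : Fin n → F4) :
    Polynomial F4 →+* Polynomial F4 ⧸ Ideal.span {X ^ n - polyOfVec a} :=
  Ideal.Quotient.mk _

def codeImage {n : ℕ} (a : Fin n → F4) (C : AddSubgroup (Fin n → F4)) :
    Set (Polynomial F4 ⧸ Ideal.span {X ^ n - polyOfVec a}) :=
  (fun c => quotMk a (polyOfVec c)) '' (C : Set (Fin n → F4))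

/-- The reversed polynomial `c̃(x) = c_{n-1} + c_{n-2} x + ⋯ + c_0 x^{n-1}`. -/
def polyOfVecRev {n : ℕ} (c : Fin n → F4) : Polynomial F4 :=
  ∑ i : Fin n, Polynomial.C (c i) * X ^ (n - 1 - (i : ℕ))

def quotMkRev {n : ℕ} (a : Fin n → F4) :
    Polynomial F4 →+* Polynomial F4 ⧸ Ideal.span {X ^ n - polyOfVecRev a} :=
  Ideal.Quotient.mk _

def codeImageRev {n : ℕ} (a : Fin n → F4) (C : AddSubgroup (Fin n → F4)) :
    Set (Polynomial F4 ⧸ Ideal.span {X ^ n - polyOfVecRev a}) :=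
  (fun c => quotMkRev a (polyOfVecRev c)) '' (C : Set (Fin n → F4))

lemma coeff_polyOfVecRev {n : ℕ} (c : Fin n → F4) (i : Fin n) :
    (polyOfVecRev c).coeff (n - 1 - (i : ℕ)) = c i := by
  unfold polyOfVecRev
  rw [Polynomial.finset_sum_coeff, Finset.sum_eq_single i]
  · simp
  · intro j _ hj
    have hj' := j.isLt; have hi' := i.isLt
    simp only [Polynomial.coeff_C_mul, Polynomial.coeff_X_pow]
    rw [if_neg (show ¬(n - 1 - (i : ℕ) = n - 1 - (j : ℕ)) from
      fun hk => hj (Fin.ext (show (j : ℕ) = (i : ℕ) by omega))), mul_zero]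
  · simp

lemma degree_polyOfVecRev_lt {n : ℕ} (hn : 0 < n) (c : Fin n → F4) :
    (polyOfVecRev c).degree < n := by
  unfold polyOfVecRev
  refine lt_of_le_of_lt (Polynomial.degree_sum_le _ _) ?_
  rw [Finset.sup_lt_iff (by exact_mod_cast WithBot.bot_lt_coe n)]
  intro i _
  refine lt_of_le_of_lt (Polynomial.degree_C_mul_X_pow_le _ _) ?_
  exact_mod_cast show n - 1 - (i : ℕ) < n by omega

lemma polyOfVecRev_sub {n : ℕ} (c d : Fin n → F4) :
    polyOfVecRev (c - d) = polyOfVecRev c - polyOfVecRev d := by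
  unfold polyOfVecRev
  rw [← Finset.sum_sub_distrib]
  refine Finset.sum_congr rfl fun i _ => ?_
  simp [sub_mul]

lemma quot_polyOfVecRev_inj {n : ℕ} (hn : 0 < n) (a : Fin n → F4) {c d : Fin n → F4}
    (h : quotMkRev a (polyOfVecRev c) = quotMkRev a (polyOfVecRev d)) : c = d := by
  unfold quotMkRev at h
  have hmem : polyOfVecRev c - polyOfVecRev d ∈ Ideal.span {X ^ n - polyOfVecRev a} :=
    Ideal.Quotient.eq.mp h
  rw [Ideal.mem_span_singleton] at hmem
  have hlt : (polyOfVecRev a).degree < (X ^ n : Polynomial F4).degree := by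
    rw [Polynomial.degree_X_pow]; exact degree_polyOfVecRev_lt hn a
  have hdeg : (X ^ n - polyOfVecRev a).degree = (n : WithBot ℕ) := by
    rw [Polynomial.degree_sub_eq_left_of_degree_lt hlt, Polynomial.degree_X_pow]
  have hz : polyOfVecRev c - polyOfVecRev d = 0 := by
    refine Polynomial.eq_zero_of_dvd_of_degree_lt hmem ?_
    rw [hdeg, ← polyOfVecRev_sub]
    exact degree_polyOfVecRev_lt hn _
  rw [← polyOfVecRev_sub] at hz
  have hcd : c - d = 0 := by
    funext i
    have := congrArg (fun p => Polynomial.coeff p (n - 1 - (i : ℕ))) hz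
    simpa [coeff_polyOfVecRev] using this
  exact sub_eq_zero.mp hcd

lemma key_identity {m : ℕ} (a c : Fin (m + 1) → F4) :
    X * polyOfVecRev c =
      polyOfVecRev (leftShift a c)
        + Polynomial.C (c 0) * (X ^ (m + 1) - polyOfVecRev a) := by
  have hL : X * polyOfVecRev c
      = Polynomial.C (c 0) * X ^ (m + 1)
        + ∑ i : Fin m, Polynomial.C (c i.succ) * X ^ (m - (i : ℕ)) := by
    unfold polyOfVecRev
    rw [Finset.mul_sum, Fin.sum_univ_succ]
    congr 1
    · rw [show m + 1 - 1 - ((0 : Fin (m+1)) : ℕ) = m by simp]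
      ring
    · refine Finset.sum_congr rfl fun i _ => ?_
      have hi := i.isLt
      have h1 : m + 1 - 1 - ((i.succ : Fin (m+1)) : ℕ) = m - ((i : ℕ) + 1) := by
        simp [Fin.val_succ]
      rw [h1, show X * (Polynomial.C (c i.succ) * X ^ (m - ((i : ℕ) + 1)))
          = Polynomial.C (c i.succ) * X ^ (m - ((i : ℕ) + 1) + 1) by ring]
      congr 2
      omega
  have hR : polyOfVecRev (leftShift a c)
      = (∑ i : Fin m, Polynomial.C (c i.succ) * X ^ (m - (i : ℕ)))
        + Polynomial.C (c 0) * polyOfVecRev a := by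
    unfold polyOfVecRev leftShift
    have : ∀ i : Fin (m + 1),
        Polynomial.C ((if h : (i : ℕ) + 1 < m + 1 then c ⟨(i : ℕ) + 1, h⟩ else 0)
            + c ⟨0, i.pos⟩ * a i) * X ^ (m + 1 - 1 - (i : ℕ))
        = Polynomial.C (if h : (i : ℕ) + 1 < m + 1 then c ⟨(i : ℕ) + 1, h⟩ else 0)
              * X ^ (m + 1 - 1 - (i : ℕ))
            + Polynomial.C (c 0) * (Polynomial.C (a i) * X ^ (m + 1 - 1 - (i : ℕ))) := by
      intro i
      have : c ⟨0, i.pos⟩ = c 0 := by congr 1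
      rw [this, map_add, map_mul, add_mul]
      ring
    rw [Finset.sum_congr rfl fun i _ => this i, Finset.sum_add_distrib, ← Finset.mul_sum]
    congr 1
    rw [Fin.sum_univ_castSucc]
    have hlast : Polynomial.C (if h : ((Fin.last m : Fin (m+1)) : ℕ) + 1 < m + 1
        then c ⟨((Fin.last m : Fin (m+1)) : ℕ) + 1, h⟩ else 0)
        * X ^ (m + 1 - 1 - ((Fin.last m : Fin (m+1)) : ℕ)) = 0 := by
      rw [dif_neg (by simp [Fin.val_last])]
      simp
    rw [hlast, add_zero]
    refine Finset.sum_congr rfl fun i _ => ?_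
    have hi := i.isLt
    have hc : ((i.castSucc : Fin (m+1)) : ℕ) = (i : ℕ) := rfl
    rw [dif_pos (by omega)]
    rfl
  rw [hL, hR]
  ring

/-- an additive code `C ⊆ F4^n` is an additive left polycyclic code
induced by a binary vector `a` iff its image in `F4[x]/(x^n - ã(x))` under
`c ↦ c̃(x)` is closed under multiplication by `x`. -/
theorem stmt_2 (n : ℕ) (hn : 0 < n) (a : Fin n → F4) (ha : IsBinVec a)
    (C : AddSubgroup (Fin n → F4)) :
    IsLeftPolycyclic a C ↔
      ∀ y ∈ codeImageRev a C, quotMkRev a X * y ∈ codeImageRev a C := by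
  obtain ⟨m, rfl⟩ : ∃ m, n = m + 1 := ⟨n - 1, by omega⟩
  have hmk : ∀ c : Fin (m + 1) → F4,
      quotMkRev a X * quotMkRev a (polyOfVecRev c)
        = quotMkRev a (polyOfVecRev (leftShift a c)) := by
    intro c
    rw [← map_mul]
    unfold quotMkRev
    rw [Ideal.Quotient.eq, Ideal.mem_span_singleton]
    exact ⟨Polynomial.C (c 0), by rw [key_identity a c]; ring⟩
  constructor
  · rintro hC y ⟨c, hc, rfl⟩
    exact ⟨leftShift a c, hC c hc, (hmk c).symm⟩
  · intro h c hc
    obtain ⟨d, hd, hde⟩ := h _ ⟨c, hc, rfl⟩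
    dsimp only at hde
    have heq : quotMkRev a (polyOfVecRev d)
        = quotMkRev a (polyOfVecRev (leftShift a c)) := by
      rw [hde, hmk c]
    have := quot_polyOfVecRev_inj (Nat.succ_pos m) a heq
    rwa [this] at hd
end
end

section
/- Let a = (a_0, …, a_{n−1}) be a binary vector with a_0 ≠ 0, and define d = (d_0, …, d_{n−1}) by d_j = −a_{j+1}/a_0 for 0 ≤ j < n−1 and d_{n−1} = 1/a_0 (so, since the entries lie in F2 and a_0 = 1, d_j = a_{j+1} and d_{n−1} = 1). If C is an additive right polycyclic code induced by a, then C is an additive left polycyclic code induced by d. -/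
open Polynomial

noncomputable section

/-- The vector `d` with `d_j = -a_{j+1}/a_0` for `j < n-1` and `d_{n-1} = 1/a_0`. -/
def dVec {n : ℕ} (a : Fin n → F4) : Fin n → F4 := fun j =>
  if h : (j : ℕ) + 1 < n then -a ⟨(j : ℕ) + 1, h⟩ / a ⟨0, j.pos⟩ else 1 / a ⟨0, j.pos⟩

/-- if `C` is an additive right polycyclic code induced by a binary
vector `a` with `a_0 ≠ 0`, then `C` is an additive left polycyclic code induced
by `d`, where `d_j = -a_{j+1}/a_0` for `j < n-1` and `d_{n-1} = 1/a_0`. -/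
theorem stmt_3 (n : ℕ) (hn : 0 < n) (a : Fin n → F4) (ha : IsBinVec a)
    (ha0 : a ⟨0, hn⟩ ≠ 0) (C : AddSubgroup (Fin n → F4))
    (hC : IsRightPolycyclic a C) :
    IsLeftPolycyclic (dVec a) C := by
  -- a_0 = 1
  have ha1 : a ⟨0, hn⟩ = 1 := (ha ⟨0, hn⟩).resolve_left ha0
  -- left inverse identity
  have hinv : ∀ b : Fin n → F4, leftShift (dVec a) (rightShift a b) = b := by
    intro b
    funext i
    simp only [leftShift, rightShift, dVec]
    have h0 : a ⟨0, i.pos⟩ = 1 := by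
      have : (⟨0, i.pos⟩ : Fin n) = ⟨0, hn⟩ := rfl
      rw [this, ha1]
    by_cases h : (i : ℕ) + 1 < n
    · have hne : ((⟨(i : ℕ) + 1, h⟩ : Fin n) : ℕ) ≠ 0 := Nat.succ_ne_zero _
      have hsub : ((⟨(i : ℕ) + 1, h⟩ : Fin n) : ℕ) - 1 = (i : ℕ) := rfl
      simp only [dif_pos h, if_neg hne, if_pos rfl, h0, div_one, hsub, Fin.eta, if_true]
      ring
    · have hi : (i : ℕ) = n - 1 := by omega
      have heq : (⟨n - 1, Nat.sub_lt i.pos Nat.one_pos⟩ : Fin n) = i := by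
        ext; simp [hi]
      simp only [dif_neg h, if_pos rfl, h0, div_one, heq, if_true]
      ring
  -- rightShift a is injective, hence bijective on the finite set C
  have hmaps : Set.MapsTo (rightShift a) (C : Set (Fin n → F4)) C := hC
  have hinj : Set.InjOn (rightShift a) (C : Set (Fin n → F4)) := by
    intro x _ y _ hxy
    have := congrArg (leftShift (dVec a)) hxy
    rwa [hinv, hinv] at this
  have hbij := ((Set.toFinite (C : Set (Fin n → F4))).injOn_iff_bijOn_of_mapsTo hmaps).mp hinj
  intro c hc
  obtain ⟨b, hb, hbc⟩ := hbij.surjOn hc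
  rw [← hbc, hinv]
  exact hb
end
end

section
/- Let a = (a_0, …, a_{n−1}) be a binary vector with a_0 ≠ 0, and let d be defined by d_j = −a_{j+1}/a_0 for j < n−1 and d_{n−1} = 1/a_0. If a = d (i.e., the right polycyclic shift by a and the associated left polycyclic shift coincide, as for an additive right-left polycyclic code induced by a), then the polynomial a(x) = a_0 + a_1 x + ⋯ + a_{n−1} x^{n−1} satisfies (1 + a_0 x)·a(x) = x^n + a_0 in F2[x] (so a(x) = (x^n + a_0)/(1 + a_0 x)), and a_0^{n+1} = (−1)^{n+1}. -/
open Polynomial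

noncomputable section

/-- The polynomial `a(x) = a_0 + a_1 x + ⋯ + a_{n-1} x^{n-1}` over `F2 = ZMod 2`
associated to a binary vector. -/
def polyOfVec2 {n : ℕ} (a : Fin n → ZMod 2) : Polynomial (ZMod 2) :=
  ∑ i : Fin n, Polynomial.C (a i) * X ^ (i : ℕ)

/-- The vector `d` with `d_j = -a_{j+1}/a_0` for `j < n-1` and `d_{n-1} = 1/a_0`. -/
def dVec2 {n : ℕ} (a : Fin n → ZMod 2) : Fin n → ZMod 2 := fun j =>
  if h : (j : ℕ) + 1 < n then -a ⟨(j : ℕ) + 1, h⟩ / a ⟨0, j.pos⟩ else 1 / a ⟨0, j.pos⟩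

/-- if the binary vector `a` (with `a_0 ≠ 0`) coincides with the
induced vector `d` (the right-left polycyclic situation), then
`(1 + a_0 x)·a(x) = x^n + a_0` in `F2[x]`, and `a_0^{n+1} = (-1)^{n+1}`. -/
theorem stmt_4 (n : ℕ) (hn : 0 < n) (a : Fin n → ZMod 2)
    (ha0 : a ⟨0, hn⟩ ≠ 0) (had : a = dVec2 a) :
    (1 + Polynomial.C (a ⟨0, hn⟩) * X) * polyOfVec2 a
        = X ^ n + Polynomial.C (a ⟨0, hn⟩) ∧
      (a ⟨0, hn⟩) ^ (n + 1) = (-1) ^ (n + 1) := by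

  have h01 : ∀ x : ZMod 2, x ≠ 0 → x = 1 := by decide
  have ha1 : a ⟨0, hn⟩ = 1 := h01 _ ha0
  have key : ∀ m, ∀ i : Fin n, (i : ℕ) + m + 1 = n → a i = 1 := by
    intro m
    induction m with
    | zero =>
      intro i hi
      have h := congrFun had i
      rw [dVec2, dif_neg (by omega)] at h
      have h0 : a ⟨0, i.pos⟩ = 1 := ha1
      rw [h0] at h
      simpa using h
    | succ m ih =>
      intro i hi
      have h := congrFun had i
      rw [dVec2, dif_pos (by omega : (i : ℕ) + 1 < n)] at h
      have h0 : a ⟨0, i.pos⟩ = 1 := ha1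
      have h1 : a ⟨(i : ℕ) + 1, by omega⟩ = 1 := ih ⟨(i : ℕ) + 1, by omega⟩ (by simp; omega)
      rw [h0, h1] at h
      simpa using h
  have hall : ∀ i : Fin n, a i = 1 := fun i => key (n - 1 - (i : ℕ)) i (by omega)
  have hp : polyOfVec2 a = ∑ i ∈ Finset.range n, (X : Polynomial (ZMod 2)) ^ i := by
    rw [polyOfVec2]
    simp only [hall, map_one, one_mul]
    exact Fin.sum_univ_eq_sum_range (fun i => (X : Polynomial (ZMod 2)) ^ i) n
  constructor
  · rw [hp, ha1, map_one, one_mul]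
    have := geom_sum_mul (X : Polynomial (ZMod 2)) n
    have hc : (X : Polynomial (ZMod 2)) - 1 = 1 + X := by
      rw [CharTwo.sub_eq_add]; ring
    rw [hc] at this
    rw [mul_comm, this, CharTwo.sub_eq_add]
  · rw [ha1]
    have : (-1 : ZMod 2) = 1 := by decide
    rw [this]
end
end

section
/- Let C be an additive right polycyclic code induced by a binary vector a. Then there exist binary polynomials g_1, g_2, b of degree less than n such that (g_1, g_2, b) is a standard generating triple for C and C equals the F2[x]-submodule of R_n generated by the two elements α g_1 + g_2 and b; in particular every element of C can be written as q_1·(α g_1 + g_2) + q_2·b in R_n with q_1, q_2 binary polynomials. -/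
open Polynomial

noncomputable section

/-- `(g1, g2, b)` is a standard generating triple for the additive code `C`,
viewed inside `R_n = F4[x]/(x^n - a(x))`:  `b` is a binary polynomial of degree
less than `n` in `C` of minimal degree among nonzero binary polynomials in `C`
(`b = 0` if `C` contains no nonzero binary polynomial), `α g1 + g2` is a
nonbinary element of `C` with `g1, g2` binary of degree less than `n` and `g1`
of minimal degree among binary parts of nonbinary elements of `C`
(`α g1 + g2 = 0` if every element of `C` is binary), and `deg g2 < deg b`
whenever `b ≠ 0` and `g2 ≠ 0`. -/
def StdTriple {n : ℕ} (a : Fin n → F4) (C : AddSubgroup (Fin n → F4)) (α : F4)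
    (g1 g2 b : Polynomial F4) : Prop :=
  IsBinPoly g1 ∧ IsBinPoly g2 ∧ IsBinPoly b ∧
  g1.degree < (n : WithBot ℕ) ∧ g2.degree < (n : WithBot ℕ) ∧ b.degree < (n : WithBot ℕ) ∧
  ((b = 0 ∧ ∀ p : Polynomial F4, IsBinPoly p → p.degree < (n : WithBot ℕ) →
      quotMk a p ∈ codeImage a C → p = 0) ∨
   (b ≠ 0 ∧ quotMk a b ∈ codeImage a C ∧
      ∀ p : Polynomial F4, IsBinPoly p → p ≠ 0 → p.degree < (n : WithBot ℕ) →
        quotMk a p ∈ codeImage a C → b.degree ≤ p.degree)) ∧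
  ((g1 = 0 ∧ g2 = 0 ∧ ∀ h1 h2 : Polynomial F4, IsBinPoly h1 → IsBinPoly h2 →
      h1.degree < (n : WithBot ℕ) → h2.degree < (n : WithBot ℕ) →
      quotMk a (Polynomial.C α * h1 + h2) ∈ codeImage a C → h1 = 0) ∨
   (g1 ≠ 0 ∧ quotMk a (Polynomial.C α * g1 + g2) ∈ codeImage a C ∧
      ∀ h1 h2 : Polynomial F4, IsBinPoly h1 → IsBinPoly h2 → h1 ≠ 0 →
        h1.degree < (n : WithBot ℕ) → h2.degree < (n : WithBot ℕ) →
        quotMk a (Polynomial.C α * h1 + h2) ∈ codeImage a C → g1.degree ≤ h1.degree)) ∧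
  (b ≠ 0 → g2 ≠ 0 → g2.degree < b.degree)

/-- `C` equals the `F2[x]`-submodule of `R_n` generated by `α g1 + g2` and `b`:
every element of `C` is of the form `q1 (α g1 + g2) + q2 b` with `q1, q2`
binary polynomials, and conversely every such combination lies in `C`. -/
def GeneratesCode {n : ℕ} (a : Fin n → F4) (C : AddSubgroup (Fin n → F4)) (α : F4)
    (g1 g2 b : Polynomial F4) : Prop :=
  (∀ c ∈ C, ∃ q1 q2 : Polynomial F4, IsBinPoly q1 ∧ IsBinPoly q2 ∧
      quotMk a (polyOfVec c) = quotMk a (q1 * (Polynomial.C α * g1 + g2) + q2 * b)) ∧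
  (∀ q1 q2 : Polynomial F4, IsBinPoly q1 → IsBinPoly q2 →
      quotMk a (q1 * (Polynomial.C α * g1 + g2) + q2 * b) ∈ codeImage a C)

/-! The binary polynomials of degree `< n` whose classes lie in the code are closed under
remainders, so, as in a Euclidean domain, a nonzero one `b` of least degree divides all of them;
the same holds for the `α`-components `h₁` of codewords `α h₁ + h₂`, with generator `g₁`. Given a
codeword `α p₁ + p₂`, write `p₁ = q₁ g₁`; subtracting `q₁ (α g₁ + g₂)` leaves a binary codeword,
hence a multiple of `b`. Conversely, multiplication by `x` in `R_n` is the polycyclic shift, so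
the code is an `F₂[x]`-module and contains every combination. -/

local notation "ι" => algebraMap (ZMod 2) F4

theorem isBin_iff_mem_range {z : F4} : IsBin z ↔ z ∈ (ι).range := by
  constructor
  · rintro (rfl | rfl)
    exacts [zero_mem _, one_mem _]
  · rintro ⟨t, rfl⟩
    fin_cases t
    exacts [Or.inl (map_zero _), Or.inr (map_one _)]

theorem isBinPoly_iff_mem_range {p : F4[X]} :
    IsBinPoly p ↔ p ∈ (mapRingHom ι).range := by
  refine ⟨fun hp => ?_, ?_⟩
  · choose f hf using fun i => isBin_iff_mem_range.mp (hp i)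
    refine ⟨∑ i ∈ p.support, monomial i (f i), ?_⟩
    ext i
    by_cases hi : i ∈ p.support
    · simp [finsetSum_coeff, coeff_monomial, hi, hf]
    · simp_all [finsetSum_coeff, coeff_monomial]
  · rintro ⟨P, rfl⟩ i
    exact isBin_iff_mem_range.mpr ⟨P.coeff i, by simp⟩

namespace IsBinPoly

theorem zero : IsBinPoly 0 := isBinPoly_iff_mem_range.mpr (zero_mem _)

theorem X_pow (k : ℕ) : IsBinPoly (X ^ k) := isBinPoly_iff_mem_range.mpr ⟨X ^ k, by simp⟩

theorem sub {p q : F4[X]} (hp : IsBinPoly p) (hq : IsBinPoly q) : IsBinPoly (p - q) :=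
  isBinPoly_iff_mem_range.mpr <|
    sub_mem (isBinPoly_iff_mem_range.mp hp) (isBinPoly_iff_mem_range.mp hq)

theorem mul {p q : F4[X]} (hp : IsBinPoly p) (hq : IsBinPoly q) : IsBinPoly (p * q) :=
  isBinPoly_iff_mem_range.mpr <|
    mul_mem (isBinPoly_iff_mem_range.mp hp) (isBinPoly_iff_mem_range.mp hq)

theorem monic {p : F4[X]} (hp : IsBinPoly p) (h0 : p ≠ 0) : p.Monic :=
  (hp p.natDegree).resolve_left (leadingCoeff_ne_zero.mpr h0)

/-- For `b = 0` this is the trivial division `p = 0 * b + p`. -/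
theorem exists_divMod {p b : F4[X]} (hp : IsBinPoly p) (hb : IsBinPoly b) :
    ∃ q r, IsBinPoly q ∧ IsBinPoly r ∧ p = q * b + r ∧ (b ≠ 0 → r.degree < b.degree) := by
  rcases eq_or_ne b 0 with rfl | hb0
  · exact ⟨0, p, zero, hp, by simp, fun h => absurd rfl h⟩
  obtain ⟨P, rfl⟩ := isBinPoly_iff_mem_range.mp hp
  obtain ⟨B, rfl⟩ := isBinPoly_iff_mem_range.mp hb
  have hB : B.Monic := monic_map_iff.mp (hb.monic hb0)
  refine ⟨(P /ₘ B).map ι, (P %ₘ B).map ι, isBinPoly_iff_mem_range.mpr ⟨_, rfl⟩,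
    isBinPoly_iff_mem_range.mpr ⟨_, rfl⟩, ?_, fun _ => ?_⟩
  · simp only [coe_mapRingHom, ← Polynomial.map_mul, ← Polynomial.map_add]
    rw [mul_comm, add_comm, modByMonic_add_div]
  · simpa only [coe_mapRingHom, degree_map] using degree_modByMonic_lt P hB

end IsBinPoly

theorem notMem_range_of_sq_add_add_one {α : F4} (hα : α ^ 2 + α + 1 = 0) : α ∉ (ι).range := by
  rintro ⟨t, rfl⟩
  obtain rfl | rfl : t = 0 ∨ t = 1 := by clear hα; revert t; decide
  · simp at hα
  · simp [CharTwo.add_self_eq_zero] at hα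

theorem exists_eq_mul_add_of_notMem_range {α : F4} (hα : α ∉ (ι).range) (z : F4) :
    ∃ s t : ZMod 2, z = α * ι s + ι t := by
  let f : ZMod 2 × ZMod 2 → F4 := fun st => α * ι st.1 + ι st.2
  have hinj : Function.Injective f := by
    rintro ⟨s, t⟩ ⟨s', t'⟩ h
    have hs : s = s' := by
      by_contra hne
      have hne' : ι (s - s') ≠ 0 := by simpa [sub_eq_zero] using hne
      refine hα ⟨(t' - t) * (s - s')⁻¹, ?_⟩
      rw [map_mul, map_inv₀, mul_inv_eq_iff_eq_mul₀ hne']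
      simp only [f, map_sub] at h ⊢
      linear_combination -h
    subst hs
    simpa [f] using h
  have hcard : Nat.card (ZMod 2 × ZMod 2) = Nat.card F4 := by
    simp [GaloisField.card 2 2 two_ne_zero]
  obtain ⟨⟨s, t⟩, hst⟩ := ((Nat.bijective_iff_injective_and_card f).mpr ⟨hinj, hcard⟩).2 z
  exact ⟨s, t, hst.symm⟩

section PolyOfVec

variable {n : ℕ}

theorem coeff_polyOfVec (c : Fin n → F4) (j : ℕ) :
    (polyOfVec c).coeff j = if h : j < n then c ⟨j, h⟩ else 0 := by
  simp only [polyOfVec, finsetSum_coeff, coeff_C_mul_X_pow]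
  split_ifs with h
  · rw [Finset.sum_eq_single ⟨j, h⟩ (fun i _ hi => if_neg fun hj => hi (Fin.ext hj.symm))
      (by simp)]
    simp
  · exact Finset.sum_eq_zero fun i _ => if_neg fun hj => h (by omega)

theorem degree_polyOfVec_lt (c : Fin n → F4) : (polyOfVec c).degree < n :=
  degree_lt_iff_coeff_zero _ _ |>.mpr fun m hm => by rw [coeff_polyOfVec, dif_neg (by omega)]

theorem isBinPoly_polyOfVec {c : Fin n → F4} (hc : IsBinVec c) : IsBinPoly (polyOfVec c) :=
  fun j => by
    rw [coeff_polyOfVec]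
    split_ifs
    exacts [hc _, Or.inl rfl]

theorem polyOfVec_add (c d : Fin n → F4) : polyOfVec (c + d) = polyOfVec c + polyOfVec d := by
  simp [polyOfVec, add_mul, Finset.sum_add_distrib]

theorem exists_polyOfVec_eq_C_mul_add {α : F4} (hα : α ∉ (ι).range) (c : Fin n → F4) :
    ∃ p₁ p₂, IsBinPoly p₁ ∧ IsBinPoly p₂ ∧ p₁.degree < n ∧ p₂.degree < n ∧
      polyOfVec c = C α * p₁ + p₂ := by
  choose s t hst using fun i => exists_eq_mul_add_of_notMem_range hα (c i)
  have hbin (u : Fin n → ZMod 2) : IsBinVec fun i => ι (u i) :=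
    fun i => isBin_iff_mem_range.mpr ⟨u i, rfl⟩
  refine ⟨_, _, isBinPoly_polyOfVec (hbin s), isBinPoly_polyOfVec (hbin t),
    degree_polyOfVec_lt _, degree_polyOfVec_lt _, ?_⟩
  simp [polyOfVec, hst, Finset.mul_sum, Finset.sum_add_distrib, add_mul, mul_assoc]

theorem polyOfVec_rightShift (a c : Fin (n + 1) → F4) :
    polyOfVec (rightShift a c) =
      X * polyOfVec c - C (c (Fin.last n)) * (X ^ (n + 1) - polyOfVec a) := by
  ext (_ | j)
  · simp [coeff_polyOfVec, rightShift, Fin.last]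
  · simp only [coeff_polyOfVec, rightShift, coeff_sub, coeff_X_mul, coeff_C_mul, coeff_X_pow]
    rcases lt_trichotomy j n with hj | rfl | hj
    · simp [hj, hj.le, Nat.ne_of_lt hj, Fin.last]
    · simp [Fin.last]
    · simp [hj.not_gt, hj.not_ge, hj.ne']

end PolyOfVec

section Quotient

variable {n : ℕ} (a : Fin n → F4)

theorem quotMk_modulus : quotMk a (X ^ n - polyOfVec a) = 0 :=
  Ideal.Quotient.eq_zero_iff_mem.mpr (Ideal.mem_span_singleton_self _)

theorem quotMk_polyOfVec_rightShift (c : Fin n → F4) :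
    quotMk a (polyOfVec (rightShift a c)) = quotMk a X * quotMk a (polyOfVec c) := by
  cases n with
  | zero =>
    have h (d : Fin 0 → F4) : polyOfVec d = 0 := by simp [polyOfVec]
    rw [h (rightShift a c), h c, map_zero, mul_zero]
  | succ n => simp [polyOfVec_rightShift, quotMk_modulus]

def codeMap : (Fin n → F4) →+ F4[X] ⧸ Ideal.span {X ^ n - polyOfVec a} :=
  AddMonoidHom.mk' (fun c => quotMk a (polyOfVec c)) fun c d => by simp [polyOfVec_add]

variable {a}

theorem exists_degree_lt_quotMk_eq (ha : IsBinVec a) {p : F4[X]} (hp : IsBinPoly p) :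
    ∃ r, IsBinPoly r ∧ r.degree < n ∧ quotMk a r = quotMk a p := by
  have hm : (X ^ n - polyOfVec a).degree = (n : WithBot ℕ) := by
    rw [degree_sub_eq_left_of_degree_lt] <;> simp [degree_polyOfVec_lt a]
  obtain ⟨q, r, -, hr, rfl, hdeg⟩ :=
    hp.exists_divMod ((IsBinPoly.X_pow n).sub (isBinPoly_polyOfVec ha))
  refine ⟨r, hr, hm ▸ hdeg fun h => by simp [h] at hm, ?_⟩
  simp [quotMk_modulus]

theorem X_mul_mem_map_codeMap {C : AddSubgroup (Fin n → F4)} (hC : IsRightPolycyclic a C)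
    {z} (hz : z ∈ C.map (codeMap a)) : quotMk a X * z ∈ C.map (codeMap a) := by
  obtain ⟨c, hc, rfl⟩ := hz
  exact ⟨rightShift a c, hC c hc, quotMk_polyOfVec_rightShift a c⟩

end Quotient

/-- A binary polynomial is a sum of powers of `X`. -/
theorem mul_mem_of_isBinPoly {A : Type*} [Ring A] (f : F4[X] →+* A) {S : AddSubgroup A}
    (hS : ∀ z ∈ S, f X * z ∈ S) {q : F4[X]} (hq : IsBinPoly q) {z : A} (hz : z ∈ S) :
    f q * z ∈ S := by
  have hpow (k : ℕ) : f X ^ k * z ∈ S := by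
    induction k with
    | zero => simpa using hz
    | succ k ih => simpa [pow_succ', mul_assoc] using hS _ ih
  have hq1 : ∀ i ∈ q.support, q.coeff i = 1 := fun i hi => (hq i).resolve_left (by simpa using hi)
  rw [q.as_sum_support, map_sum, Finset.sum_mul]
  refine S.sum_mem fun i hi => ?_
  simpa [hq1 i hi, ← C_mul_X_pow_eq_monomial] using hpow i

def BinGenerates (g : F4[X]) (M : Set F4[X]) : Prop :=
  ∀ p ∈ M, ∃ q, IsBinPoly q ∧ p = q * g

namespace BinGenerates

variable {g : F4[X]} {M : Set F4[X]}

theorem zero_or_minimal (hg : BinGenerates g M) :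
    (g = 0 ∧ ∀ p ∈ M, p = 0) ∨ (g ≠ 0 ∧ ∀ p ∈ M, p ≠ 0 → g.degree ≤ p.degree) := by
  rcases eq_or_ne g 0 with rfl | hg0
  · refine Or.inl ⟨rfl, fun p hp => ?_⟩
    obtain ⟨q, -, rfl⟩ := hg p hp
    exact mul_zero q
  · refine Or.inr ⟨hg0, fun p hp hp0 => ?_⟩
    obtain ⟨q, -, rfl⟩ := hg p hp
    exact degree_le_of_dvd (dvd_mul_left g q) hp0

end BinGenerates

/-- As in a Euclidean domain, a nonzero member of least degree generates, because remainders
stay in `M`. -/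
theorem exists_binGenerates {M : Set F4[X]} (hbin : ∀ p ∈ M, IsBinPoly p) (h0 : 0 ∈ M)
    (hrem : ∀ p ∈ M, ∀ g ∈ M, ∀ q, IsBinPoly q → (p - q * g).degree < g.degree → p - q * g ∈ M) :
    ∃ g ∈ M, BinGenerates g M := by
  by_cases hM : ∃ p, p ∈ M ∧ p ≠ 0
  · obtain ⟨g, ⟨hgM, hg0⟩, hmin⟩ :=
      exists_minimalFor_of_wellFoundedLT (fun p => p ∈ M ∧ p ≠ 0) degree hM
    refine ⟨g, hgM, fun p hp => ?_⟩
    obtain ⟨q, r, hq, -, rfl, hr⟩ := (hbin p hp).exists_divMod (hbin g hgM)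
    refine ⟨q, hq, ?_⟩
    have hrM : r ∈ M := by simpa using hrem _ hp g hgM q hq (by simpa using hr hg0)
    by_contra hne
    exact (hr hg0).not_ge (hmin ⟨hrM, by simpa using hne⟩ (hr hg0).le)
  · push Not at hM
    exact ⟨0, h0, fun p hp => ⟨0, .zero, by simp [hM p hp]⟩⟩

section Generators

variable {n : ℕ} {a : Fin n → F4} (S : AddSubgroup (F4[X] ⧸ Ideal.span {X ^ n - polyOfVec a}))

def binaryMembers : Set F4[X] := {p | IsBinPoly p ∧ p.degree < n ∧ quotMk a p ∈ S}

def alphaComponents (α : F4) : Set F4[X] :=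
  {h₁ | IsBinPoly h₁ ∧ h₁.degree < n ∧
    ∃ h₂, IsBinPoly h₂ ∧ h₂.degree < n ∧ quotMk a (C α * h₁ + h₂) ∈ S}

variable {S} (hS : ∀ q, IsBinPoly q → ∀ z ∈ S, quotMk a q * z ∈ S)
include hS

theorem exists_binGenerates_binaryMembers :
    ∃ b ∈ binaryMembers S, BinGenerates b (binaryMembers S) := by
  refine exists_binGenerates (fun p hp => hp.1) ⟨.zero, by simp, by simp [S.zero_mem]⟩ ?_
  rintro p ⟨hp, -, hpS⟩ g ⟨hg, hgn, hgS⟩ q hq hdeg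
  refine ⟨hp.sub (hq.mul hg), hdeg.trans hgn, ?_⟩
  simpa using S.sub_mem hpS (hS q hq _ hgS)

variable (ha : IsBinVec a) (α : F4)
include ha

theorem exists_binGenerates_alphaComponents :
    ∃ g ∈ alphaComponents S α, BinGenerates g (alphaComponents S α) := by
  refine exists_binGenerates (fun p hp => hp.1)
    ⟨.zero, by simp, 0, .zero, by simp, by simp [S.zero_mem]⟩ ?_
  rintro p ⟨hp, -, p₂, hp₂, -, hpS⟩ g ⟨hg, hgn, g₂, hg₂, -, hgS⟩ q hq hdeg
  obtain ⟨r, hr, hrn, hrq⟩ := exists_degree_lt_quotMk_eq ha (hp₂.sub (hq.mul hg₂))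
  refine ⟨hp.sub (hq.mul hg), hdeg.trans hgn, r, hr, hrn, ?_⟩
  have hsplit : quotMk a (C α * (p - q * g) + r) =
      quotMk a (C α * p + p₂) - quotMk a q * quotMk a (C α * g + g₂) := by
    rw [map_add, hrq]
    simp only [map_add, map_sub, map_mul]
    ring
  exact hsplit ▸ S.sub_mem hpS (hS q hq _ hgS)

theorem exists_alphaGenerator {b : F4[X]} (hb : b ∈ binaryMembers S) :
    ∃ g₁ g₂, IsBinPoly g₁ ∧ IsBinPoly g₂ ∧ g₁.degree < n ∧ g₂.degree < n ∧
      quotMk a (C α * g₁ + g₂) ∈ S ∧ (g₁ = 0 → g₂ = 0) ∧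
      (b ≠ 0 → g₂ ≠ 0 → g₂.degree < b.degree) ∧ BinGenerates g₁ (alphaComponents S α) := by
  obtain ⟨g₁, ⟨hg₁, hg₁n, g₂, hg₂, hg₂n, hgS⟩, hgen⟩ :=
    exists_binGenerates_alphaComponents hS ha α
  rcases eq_or_ne g₁ 0 with rfl | hg₁0
  · exact ⟨0, 0, .zero, .zero, by simp, by simp, by simp [S.zero_mem], fun _ => rfl,
      fun _ h => absurd rfl h, hgen⟩
  obtain ⟨q, r, hq, hr, rfl, hrb⟩ := hg₂.exists_divMod hb.1
  refine ⟨g₁, r, hg₁, hr, hg₁n, ?_, ?_, fun h => absurd h hg₁0, fun hb0 _ => hrb hb0, hgen⟩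
  · rcases eq_or_ne b 0 with rfl | hb0
    · simpa using hg₂n
    · exact (hrb hb0).trans hb.2.1
  · have hsplit : quotMk a (C α * g₁ + r) =
        quotMk a (C α * g₁ + (q * b + r)) - quotMk a q * quotMk a b := by
      simp only [map_add, map_mul]
      ring
    exact hsplit ▸ S.sub_mem hgS (hS q hq _ hb.2.2)

/-- Strip the `α`-component with a multiple of `α g₁ + g₂`; the binary rest is a multiple of `b`. -/
theorem exists_quotMk_eq_combination {b g₁ g₂ : F4[X]} (hb : BinGenerates b (binaryMembers S))
    (hg₁ : BinGenerates g₁ (alphaComponents S α)) (hg₂ : IsBinPoly g₂)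
    (hgS : quotMk a (C α * g₁ + g₂) ∈ S) {p₁ p₂ : F4[X]} (hp₁ : IsBinPoly p₁)
    (hp₂ : IsBinPoly p₂) (hp₁n : p₁.degree < n) (hp₂n : p₂.degree < n)
    (hpS : quotMk a (C α * p₁ + p₂) ∈ S) :
    ∃ q₁ q₂, IsBinPoly q₁ ∧ IsBinPoly q₂ ∧
      quotMk a (C α * p₁ + p₂) = quotMk a (q₁ * (C α * g₁ + g₂) + q₂ * b) := by
  obtain ⟨q₁, hq₁, rfl⟩ := hg₁ p₁ ⟨hp₁, hp₁n, p₂, hp₂, hp₂n, hpS⟩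
  obtain ⟨s, hs, hsn, hsq⟩ := exists_degree_lt_quotMk_eq ha (hp₂.sub (hq₁.mul hg₂))
  have hsplit : quotMk a (C α * (q₁ * g₁) + p₂) =
      quotMk a q₁ * quotMk a (C α * g₁ + g₂) + quotMk a s := by
    rw [hsq]
    simp only [map_add, map_sub, map_mul]
    ring
  have hsS : quotMk a s ∈ S := eq_sub_of_add_eq' hsplit.symm ▸ S.sub_mem hpS (hS _ hq₁ _ hgS)
  obtain ⟨q₂, hq₂, rfl⟩ := hb s ⟨hs, hsn, hsS⟩
  exact ⟨q₁, q₂, hq₁, hq₂, by rw [hsplit]; simp only [map_add, map_mul]⟩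

end Generators

theorem stmt_5_general (n : ℕ) (a : Fin n → F4) (ha : IsBinVec a)
    (C : AddSubgroup (Fin n → F4)) (hC : IsRightPolycyclic a C)
    (α : F4) (hα : α ^ 2 + α + 1 = 0) :
    ∃ g1 g2 b : Polynomial F4, StdTriple a C α g1 g2 b ∧ GeneratesCode a C α g1 g2 b := by
  -- `codeImage a C` is the carrier of `S`, so the two memberships agree definitionally.
  set S := C.map (codeMap a)
  have hS (q : F4[X]) (hq : IsBinPoly q) (z) (hz : z ∈ S) : quotMk a q * z ∈ S :=
    mul_mem_of_isBinPoly (quotMk a) (fun _ => X_mul_mem_map_codeMap hC) hq hz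
  obtain ⟨b, hbM, hb⟩ := exists_binGenerates_binaryMembers hS
  obtain ⟨g1, g2, hg1, hg2, hg1n, hg2n, hgS, hg0, hg2b, hg⟩ := exists_alphaGenerator hS ha α hbM
  refine ⟨g1, g2, b, ⟨hg1, hg2, hbM.1, hg1n, hg2n, hbM.2.1, ?_, ?_, hg2b⟩, ?_, ?_⟩
  · rcases hb.zero_or_minimal with ⟨hb0, hmin⟩ | ⟨hb0, hmin⟩
    · exact Or.inl ⟨hb0, fun p hp hpn hpS => hmin p ⟨hp, hpn, hpS⟩⟩
    · exact Or.inr ⟨hb0, hbM.2.2, fun p hp hp0 hpn hpS => hmin p ⟨hp, hpn, hpS⟩ hp0⟩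
  · rcases hg.zero_or_minimal with ⟨hg10, hmin⟩ | ⟨hg10, hmin⟩
    · exact Or.inl ⟨hg10, hg0 hg10, fun h1 h2 hh1 hh2 hh1n hh2n hhS =>
        hmin h1 ⟨hh1, hh1n, h2, hh2, hh2n, hhS⟩⟩
    · exact Or.inr ⟨hg10, hgS, fun h1 h2 hh1 hh2 hh10 hh1n hh2n hhS =>
        hmin h1 ⟨hh1, hh1n, h2, hh2, hh2n, hhS⟩ hh10⟩
  · intro c hc
    obtain ⟨p1, p2, hp1, hp2, hp1n, hp2n, hcp⟩ :=
      exists_polyOfVec_eq_C_mul_add (notMem_range_of_sq_add_add_one hα) c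
    have hcS : quotMk a (polyOfVec c) ∈ S := ⟨c, hc, rfl⟩
    rw [hcp] at hcS ⊢
    exact exists_quotMk_eq_combination hS ha α hb hg hg2 hgS hp1 hp2 hp1n hp2n hcS
  · intro q1 q2 hq1 hq2
    rw [map_add, map_mul, map_mul]
    exact S.add_mem (hS q1 hq1 _ hgS) (hS q2 hq2 _ hbM.2.2)

/-- every additive right polycyclic code `C` induced by a binary
vector `a` admits a standard generating triple `(g1, g2, b)` of binary
polynomials of degree less than `n`, and `C` equals the `F2[x]`-submodule of
`R_n` generated by `α g1 + g2` and `b`. -/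
theorem stmt_5 (n : ℕ) (hn : 0 < n) (a : Fin n → F4) (ha : IsBinVec a)
    (C : AddSubgroup (Fin n → F4)) (hC : IsRightPolycyclic a C)
    (α : F4) (hα : α ^ 2 + α + 1 = 0) :
    ∃ g1 g2 b : Polynomial F4, StdTriple a C α g1 g2 b ∧ GeneratesCode a C α g1 g2 b :=
  stmt_5_general n a ha C hC α hα
end
end

section
/- Let a be a binary vector and let g_1, g_2 ∈ F2[x] be binary polynomials with g_1 ≠ 0, g_1 dividing x^n − a(x), deg g_1 = t_2 ≤ n, deg g_2 < n, and x^n − a(x) dividing ((x^n − a(x))/g_1)·g_2. If C is the F2[x]-submodule of R_n generated by α g_1 + g_2, then C has exactly 2^{n − t_2} elements. -/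
open Polynomial

noncomputable section

private lemma isBin_iff (z : F4) : IsBin z ↔ z ∈ Set.range (algebraMap (ZMod 2) F4) := by
  constructor
  · rintro (rfl | rfl)
    exacts [⟨0, map_zero _⟩, ⟨1, map_one _⟩]
  · rintro ⟨k, rfl⟩
    have h : ∀ k : ZMod 2, k = 0 ∨ k = 1 := by decide
    rcases h k with rfl | rfl
    · exact Or.inl (map_zero _)
    · exact Or.inr (map_one _)

private lemma binPoly_iff (p : Polynomial F4) :
    IsBinPoly p ↔ ∃ p₀ : Polynomial (ZMod 2), p₀.map (algebraMap (ZMod 2) F4) = p := by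
  rw [← Polynomial.mem_lifts, Polynomial.lifts_iff_coeff_lifts]
  exact forall_congr' fun i => isBin_iff _

private lemma key_dvd (α : F4) (hα2 : α ^ 2 = α + 1) (m u v : Polynomial (ZMod 2))
    (h : m.map (algebraMap (ZMod 2) F4) ∣
      Polynomial.C α * u.map (algebraMap (ZMod 2) F4) + v.map (algebraMap (ZMod 2) F4)) :
    m ∣ u ∧ m ∣ v := by
  set φ := algebraMap (ZMod 2) F4 with hφdef
  obtain ⟨h1, hh⟩ := h
  have hσφ : (frobenius F4 2).comp φ = φ := Subsingleton.elim _ _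
  have hmap : ∀ p : Polynomial (ZMod 2), (p.map φ).map (frobenius F4 2) = p.map φ := by
    intro p; rw [Polynomial.map_map, hσφ]
  have hh2 := congrArg (Polynomial.map (frobenius F4 2)) hh
  rw [Polynomial.map_add, Polynomial.map_mul, Polynomial.map_mul, Polynomial.map_C,
    hmap, hmap, hmap] at hh2
  have hC : (Polynomial.C (frobenius F4 2 α) : Polynomial F4) = Polynomial.C α + 1 := by
    rw [frobenius_def, hα2, map_add, map_one]
  have hu4 : m.map φ ∣ u.map φ := ⟨h1.map (frobenius F4 2) - h1, by
    linear_combination hh2 - hh - u.map φ * hC⟩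
  have hv4 : m.map φ ∣ v.map φ := by
    have : v.map φ = (Polynomial.C α * u.map φ + v.map φ) - Polynomial.C α * u.map φ := by ring
    rw [this]
    exact dvd_sub ⟨h1, hh⟩ (hu4.mul_left _)
  exact ⟨(Polynomial.map_dvd_map' φ).mp hu4, (Polynomial.map_dvd_map' φ).mp hv4⟩

private def bP {k : ℕ} (v : Fin k → ZMod 2) : Polynomial (ZMod 2) :=
  ∑ i : Fin k, Polynomial.C (v i) * X ^ (i : ℕ)

private lemma bP_coeff {k : ℕ} (v : Fin k → ZMod 2) (j : ℕ) :
    (bP v).coeff j = if h : j < k then v ⟨j, h⟩ else 0 := by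
  rw [bP, Polynomial.finset_sum_coeff]
  split
  · next h =>
    rw [Finset.sum_eq_single (⟨j, h⟩ : Fin k)]
    · simp
    · intro b _ hb
      simp only [Polynomial.coeff_C_mul, Polynomial.coeff_X_pow]
      rw [if_neg, mul_zero]
      intro hjb
      exact hb (Fin.ext hjb.symm)
    · simp
  · next h =>
    apply Finset.sum_eq_zero
    intro b _
    simp only [Polynomial.coeff_C_mul, Polynomial.coeff_X_pow]
    rw [if_neg, mul_zero]
    intro hjb
    omega

private lemma bP_degree_lt {k : ℕ} (v : Fin k → ZMod 2) :
    (bP v).degree < (k : WithBot ℕ) := by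
  rw [Polynomial.degree_lt_iff_coeff_zero]
  intro m hm
  have hkm : k ≤ m := by exact_mod_cast hm
  rw [bP_coeff, dif_neg (by omega)]

private lemma bP_eq {k : ℕ} (ρ : Polynomial (ZMod 2)) (h : ρ.degree < (k : WithBot ℕ)) :
    bP (fun i : Fin k => ρ.coeff i) = ρ := by
  ext j
  rw [bP_coeff]
  split
  · rfl
  · next hj =>
    have hkj : (k : WithBot ℕ) ≤ (j : WithBot ℕ) := by exact_mod_cast (by omega : k ≤ j)
    exact (Polynomial.coeff_eq_zero_of_degree_lt (h.trans_le hkj)).symm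

/-- if `g1 ≠ 0` is binary with `g1 ∣ x^n - a(x)` in `F2[x]`
(quotient `q`), `deg g1 = t2 ≤ n`, `g2` is binary of degree less than `n`, and
`x^n - a(x)` divides `((x^n - a(x))/g1) · g2 = q · g2` in `F2[x]`, then the
`F2[x]`-submodule of `R_n` generated by `α g1 + g2` has exactly `2^(n - t2)`
elements. -/
theorem stmt_14 (n : ℕ) (hn : 0 < n) (a : Fin n → F4) (ha : IsBinVec a)
    (α : F4) (hα : α ^ 2 + α + 1 = 0)
    (g1 g2 : Polynomial F4) (hg1bin : IsBinPoly g1) (hg2bin : IsBinPoly g2)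
    (hg1ne : g1 ≠ 0) (hg2deg : g2.degree < (n : WithBot ℕ))
    (q : Polynomial F4) (hqbin : IsBinPoly q) (hq : q * g1 = X ^ n - polyOfVec a)
    (t2 : ℕ) (ht2 : g1.natDegree = t2) (ht2n : t2 ≤ n)
    (r : Polynomial F4) (hrbin : IsBinPoly r) (hr : q * g2 = (X ^ n - polyOfVec a) * r) :
    Set.ncard {y : Polynomial F4 ⧸ Ideal.span {X ^ n - polyOfVec a} |
        ∃ f : Polynomial F4, IsBinPoly f ∧
          y = quotMk a (f * (Polynomial.C α * g1 + g2))}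
      = 2 ^ (n - t2) := by
  classical
  set φ := algebraMap (ZMod 2) F4 with hφdef
  -- characteristic 2 facts
  have h2 : (2 : F4) = 0 := by
    rw [← map_ofNat φ 2, show (2 : ZMod 2) = 0 by decide, map_zero]
  have hα2 : α ^ 2 = α + 1 := by linear_combination hα - (α + 1) * h2
  -- binary preimages
  obtain ⟨G1, hG1⟩ := (binPoly_iff g1).mp hg1bin
  obtain ⟨G2, hG2⟩ := (binPoly_iff g2).mp hg2bin
  obtain ⟨Q, hQ⟩ := (binPoly_iff q).mp hqbin
  -- the modulus
  have hm : (Q * G1).map φ = X ^ n - polyOfVec a := by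
    rw [Polynomial.map_mul, hQ, hG1, hq]
  -- degree facts
  have hdega : (polyOfVec a).degree < (n : WithBot ℕ) := by
    refine lt_of_le_of_lt (Polynomial.degree_sum_le _ _) ?_
    rw [Finset.sup_lt_iff (by exact WithBot.bot_lt_coe n)]
    intro i _
    exact lt_of_le_of_lt (Polynomial.degree_C_mul_X_pow_le _ _)
      (by exact_mod_cast WithBot.coe_lt_coe.mpr i.isLt)
  have hmdeg : (X ^ n - polyOfVec a).degree = (n : WithBot ℕ) := by
    rw [Polynomial.degree_sub_eq_left_of_degree_lt (by rwa [Polynomial.degree_X_pow]),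
      Polynomial.degree_X_pow]
  have hmne : (X ^ n - polyOfVec a) ≠ 0 := fun h => by
    rw [h, Polynomial.degree_zero] at hmdeg; exact absurd hmdeg (by simp)
  have hG1ne : G1 ≠ 0 := fun h => hg1ne (by rw [← hG1, h, Polynomial.map_zero])
  have hQG1ne : Q * G1 ≠ 0 := fun h => hmne (by rw [← hm, h, Polynomial.map_zero])
  have hQne : Q ≠ 0 := fun h => hQG1ne (by rw [h, zero_mul])
  have hφinj : Function.Injective φ := φ.injective
  have hG1deg : G1.natDegree = t2 := by
    rw [← ht2, ← hG1, Polynomial.natDegree_map_eq_of_injective hφinj]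
  have hQG1deg : (Q * G1).natDegree = n := by
    have := Polynomial.natDegree_map_eq_of_injective hφinj (Q * G1)
    rw [hm] at this
    rw [← this, Polynomial.natDegree_eq_of_degree_eq_some hmdeg]
  have hQdeg : Q.natDegree = n - t2 := by
    rw [Polynomial.natDegree_mul hQne hG1ne, hG1deg] at hQG1deg
    omega
  have hQdeg' : Q.degree = ((n - t2 : ℕ) : WithBot ℕ) := by
    rw [Polynomial.degree_eq_natDegree hQne, hQdeg]
  -- the parametrization map
  set F : (Fin (n - t2) → ZMod 2) → (Polynomial F4 ⧸ Ideal.span {X ^ n - polyOfVec a}) :=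
    fun v => quotMk a ((bP v).map φ * (Polynomial.C α * g1 + g2)) with hF
  -- quotient equality criterion
  have hquot : ∀ x y : Polynomial F4, quotMk a x = quotMk a y ↔ (Q * G1).map φ ∣ x - y := by
    intro x y
    rw [hm]
    exact (Ideal.Quotient.eq).trans (Ideal.mem_span_singleton)
  -- injectivity
  have hinj : Function.Injective F := by
    intro v w hvw
    obtain ⟨c, hc⟩ := (hquot _ _).mp hvw
    have hdvd : (Q * G1).map φ ∣
        Polynomial.C α * ((bP v - bP w) * G1).map φ + ((bP v - bP w) * G2).map φ := by
      refine ⟨c, ?_⟩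
      rw [Polynomial.map_mul, Polynomial.map_mul, Polynomial.map_sub, hG1, hG2]
      linear_combination hc
    obtain ⟨hd1, _⟩ := key_dvd α hα2 _ _ _ hdvd
    have hqd : Q ∣ bP v - bP w := by
      obtain ⟨c', hc'⟩ := hd1
      exact ⟨c', mul_right_cancel₀ hG1ne (by linear_combination hc')⟩
    have hdeg : (bP v - bP w).degree < Q.degree := by
      rw [hQdeg']
      exact lt_of_le_of_lt (Polynomial.degree_sub_le _ _)
        (max_lt (bP_degree_lt v) (bP_degree_lt w))
    have hz : bP v - bP w = 0 := Polynomial.eq_zero_of_dvd_of_degree_lt hqd hdeg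
    have hbp : bP v = bP w := sub_eq_zero.mp hz
    funext i
    have := congrArg (fun p => Polynomial.coeff p (i : ℕ)) hbp
    simpa [bP_coeff, i.isLt] using this
  -- the set is the range of F
  have hset : {y : Polynomial F4 ⧸ Ideal.span {X ^ n - polyOfVec a} |
        ∃ f : Polynomial F4, IsBinPoly f ∧
          y = quotMk a (f * (Polynomial.C α * g1 + g2))} = Set.range F := by
    ext y
    constructor
    · rintro ⟨f, hfbin, rfl⟩
      obtain ⟨f0, rfl⟩ := (binPoly_iff f).mp hfbin
      refine ⟨fun i => (f0 % Q).coeff i, ?_⟩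
      have hmodlt : (f0 % Q).degree < ((n - t2 : ℕ) : WithBot ℕ) := by
        rw [← hQdeg']; exact EuclideanDomain.mod_lt _ hQne
      have hmod : bP (fun i : Fin (n - t2) => (f0 % Q).coeff i) = f0 % Q := bP_eq _ hmodlt
      rw [hF]
      show quotMk a _ = quotMk a _
      rw [hquot, hmod]
      have hdam : Q * (f0 / Q) + f0 % Q = f0 := EuclideanDomain.div_add_mod f0 Q
      have hdam4 := congrArg (Polynomial.map φ) hdam
      rw [Polynomial.map_add, Polynomial.map_mul, hQ] at hdam4
      have e1 : q * (Polynomial.C α * g1 + g2) = (Q * G1).map φ * (Polynomial.C α + r) := by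
        rw [Polynomial.map_mul, hQ, hG1]
        linear_combination hr - r * hq
      refine ⟨(f0 / Q).map φ * (Polynomial.C α + r), ?_⟩
      have h2' : (2 : Polynomial F4) = 0 := by
        rw [(map_ofNat Polynomial.C 2).symm, h2, map_zero]
      linear_combination (Polynomial.C α * g1 + g2) * hdam4 - (f0 / Q).map φ * e1
        - (f0 / Q).map φ * (Q * G1).map φ * (Polynomial.C α + r) * h2'
    · rintro ⟨v, rfl⟩
      exact ⟨(bP v).map φ, (binPoly_iff _).mpr ⟨bP v, rfl⟩, rfl⟩
  rw [hset, ← Set.image_univ, Set.ncard_image_of_injective _ hinj, Set.ncard_univ,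
    Nat.card_fun, Nat.card_zmod, Nat.card_eq_fintype_card, Fintype.card_fin]
end
end

section
/- Let C be an additive code of length n over F4 and let a be a binary vector. Then C is an additive right polycyclic code induced by a if and only if the trace dual C^⊥ is an additive sequential code induced by a. -/
/-!
With respect to the trace form `⟨x, y⟩ = Tr(∑ xᵢ yᵢ²)`, the right polycyclic shift induced by `a`
is adjoint to the sequential shift induced by `a`: `⟨rightShift a x, y⟩ = ⟨x, seqShift a y⟩`.
Without the squares this is a reindexing of the sum; with them it needs `aⱼ² = aⱼ`, i.e. that `a`
is binary. Adjointness gives at once that `C^⊥` is sequential when `C` is polycyclic; the converse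
follows in the same way from `C^⊥⊥ = C`, as the trace form is a nondegenerate symmetric bilinear
form over `𝔽₂`.
-/

open Polynomial

noncomputable section

/-- The trace dual of `C` with respect to the trace inner product
`⟨x, y⟩_T = Tr(Σ_i x_i y_i²)`, where `Tr(z) = z + z²`. -/
def traceDual {n : ℕ} (C : AddSubgroup (Fin n → F4)) : Set (Fin n → F4) :=
  {y | ∀ x ∈ C, (∑ i, x i * (y i) ^ 2) + (∑ i, x i * (y i) ^ 2) ^ 2 = 0}

namespace F4

lemma algebraMap_trace (z : F4) :
    algebraMap (ZMod 2) F4 (Algebra.trace (ZMod 2) F4 z) = z + z ^ 2 := by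
  rw [FiniteField.algebraMap_trace_eq_sum_pow, GaloisField.finrank 2 two_ne_zero]
  simp [Finset.sum_range_succ]

lemma trace_eq_zero_iff {z : F4} : Algebra.trace (ZMod 2) F4 z = 0 ↔ z + z ^ 2 = 0 := by
  rw [← algebraMap_trace, map_eq_zero (algebraMap (ZMod 2) F4)]

lemma pow_four (z : F4) : z ^ 4 = z := by
  have := Fintype.ofFinite F4
  have hcard : Fintype.card F4 = 4 := by
    rw [Fintype.card_eq_nat_card, GaloisField.card 2 2 two_ne_zero]
    norm_num
  rw [← hcard, FiniteField.pow_card]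

lemma trace_sq (z : F4) : Algebra.trace (ZMod 2) F4 (z ^ 2) = Algebra.trace (ZMod 2) F4 z :=
  Algebra.trace_eq_of_algEquiv (FiniteField.frobeniusAlgEquivOfAlgebraic (ZMod 2) F4) z

end F4

-- Valued in `ZMod 2` rather than `F4`, so that `C` and `traceDual C` are orthogonal complements
-- in the sense of `LinearMap.BilinForm.orthogonal`; `frobeniusAlgHom (ZMod 2) F4` is `z ↦ z ^ 2`.
def traceInner (n : ℕ) : LinearMap.BilinForm (ZMod 2) (Fin n → F4) :=
  ((dotProductBilin (ZMod 2) (ZMod 2)).compl₂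
    (LinearMap.piMap fun _ => (FiniteField.frobeniusAlgHom (ZMod 2) F4).toLinearMap)).compr₂
    (Algebra.trace (ZMod 2) F4)

lemma traceInner_apply {n : ℕ} (x y : Fin n → F4) :
    traceInner n x y = Algebra.trace (ZMod 2) F4 (∑ i, x i * y i ^ 2) := by
  simp [traceInner, dotProduct]

lemma traceInner_isSymm (n : ℕ) : (traceInner n).IsSymm := by
  refine LinearMap.BilinForm.isSymm_def.mpr fun x y => ?_
  rw [traceInner_apply, traceInner_apply, ← F4.trace_sq, sum_pow_char]
  congr 1
  refine Finset.sum_congr rfl fun i _ => ?_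
  rw [mul_pow, ← pow_mul, F4.pow_four, mul_comm]

lemma traceInner_separatingRight (n : ℕ) : (traceInner n).SeparatingRight := by
  intro y hy
  funext i
  by_contra hyi
  obtain ⟨g, hg⟩ := Algebra.trace_surjective (ZMod 2) F4 1
  have hgy := hy (Pi.single i (g / y i ^ 2))
  simp only [traceInner_apply, Pi.single_apply, ite_mul, zero_mul, Finset.sum_ite_eq',
    Finset.mem_univ, if_true, div_mul_cancel₀ g (pow_ne_zero 2 hyi), hg] at hgy
  exact one_ne_zero hgy

lemma traceInner_nondegenerate (n : ℕ) : (traceInner n).Nondegenerate :=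
  (traceInner_isSymm n).isRefl.nondegenerate_iff_separatingRight.mpr
    (traceInner_separatingRight n)

lemma mem_traceDual_iff {n : ℕ} {C : AddSubgroup (Fin n → F4)} {y : Fin n → F4} :
    y ∈ traceDual C ↔ ∀ x ∈ C, traceInner n x y = 0 := by
  simp only [traceDual, Set.mem_ofPred_eq, traceInner_apply, F4.trace_eq_zero_iff]

lemma mem_traceDual_iff_mem_orthogonal {n : ℕ} {C : AddSubgroup (Fin n → F4)} {y : Fin n → F4} :
    y ∈ traceDual C ↔ y ∈ (traceInner n).orthogonal (C.toZModSubmodule 2) := by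
  rw [mem_traceDual_iff, LinearMap.BilinForm.mem_orthogonal_iff]
  rfl

lemma mem_iff_forall_traceDual {n : ℕ} {C : AddSubgroup (Fin n → F4)} {x : Fin n → F4} :
    x ∈ C ↔ ∀ y ∈ traceDual C, traceInner n x y = 0 := by
  have hdual := (traceInner n).orthogonal_orthogonal (traceInner_nondegenerate n)
    (traceInner_isSymm n).isRefl (C.toZModSubmodule 2)
  rw [← AddSubgroup.mem_toZModSubmodule 2, ← hdual, LinearMap.BilinForm.mem_orthogonal_iff]
  simp only [← mem_traceDual_iff_mem_orthogonal]
  exact forall₂_congr fun y _ => by rw [(traceInner_isSymm n).eq y x]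

lemma rightShift_eq_cons {m : ℕ} (a x : Fin (m + 1) → F4) :
    rightShift a x = Fin.cons 0 (fun j => x j.castSucc) + x (Fin.last m) • a := by
  funext i
  refine Fin.cases ?_ (fun j => ?_) i
  · simp [rightShift, Fin.last]
  · simp [rightShift, Fin.last]
    rfl

lemma seqShift_eq_snoc {m : ℕ} (a y : Fin (m + 1) → F4) :
    seqShift a y = Fin.snoc (fun j => y j.succ) (a ⬝ᵥ y) := by
  funext i
  refine Fin.lastCases ?_ (fun j => ?_) i
  · simp [seqShift, dotProduct]
  · simp [seqShift]
    rfl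

lemma sum_rightShift_mul {n : ℕ} (a x y : Fin n → F4) :
    ∑ i, rightShift a x i * y i = ∑ i, x i * seqShift a y i := by
  cases n with
  | zero => simp
  | succ m =>
    rw [rightShift_eq_cons, seqShift_eq_snoc]
    simp only [Pi.add_apply, Pi.smul_apply, smul_eq_mul, add_mul, Finset.sum_add_distrib]
    conv_rhs => rw [Fin.sum_univ_castSucc]
    simp [Fin.sum_univ_succ, dotProduct, Finset.mul_sum, mul_add, mul_assoc]

lemma seqShift_sq {n : ℕ} {a : Fin n → F4} (ha : IsBinVec a) (y : Fin n → F4) (i : Fin n) :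
    seqShift a y i ^ 2 = seqShift a (fun j => y j ^ 2) i := by
  unfold seqShift
  split_ifs
  · rfl
  · rw [sum_pow_char]
    refine Finset.sum_congr rfl fun j _ => ?_
    rcases ha j with h | h <;> simp [h]

lemma traceInner_rightShift {n : ℕ} {a : Fin n → F4} (ha : IsBinVec a) (x y : Fin n → F4) :
    traceInner n (rightShift a x) y = traceInner n x (seqShift a y) := by
  rw [traceInner_apply, traceInner_apply, sum_rightShift_mul a x (fun i => y i ^ 2)]
  simp only [seqShift_sq ha]

theorem stmt_17_general (n : ℕ) (a : Fin n → F4) (ha : IsBinVec a)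
    (C : AddSubgroup (Fin n → F4)) :
    IsRightPolycyclic a C ↔ ∀ c ∈ traceDual C, seqShift a c ∈ traceDual C := by
  constructor
  · intro hC y hy
    rw [mem_traceDual_iff] at hy ⊢
    intro x hx
    rw [← traceInner_rightShift ha]
    exact hy _ (hC x hx)
  · intro hdual x hx
    rw [mem_iff_forall_traceDual] at hx ⊢
    intro y hy
    rw [traceInner_rightShift ha]
    exact hx _ (hdual y hy)

/-- `C` is an additive right polycyclic code induced by the
binary vector `a` iff its trace dual `C^⊥` is an additive sequential code
induced by `a`. -/
theorem stmt_17 (n : ℕ) (hn : 0 < n) (a : Fin n → F4) (ha : IsBinVec a)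
    (C : AddSubgroup (Fin n → F4)) :
    IsRightPolycyclic a C ↔ ∀ c ∈ traceDual C, seqShift a c ∈ traceDual C :=
  stmt_17_general n a ha C
end
end
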